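/- Let T be a consistent complete theory, M ⊨ T with interpreted arithmetic, and ρ(x) the Rosser provability formula from an axiom set A axiomatizing T (as above). If ψ is an L-sentence with M ⊨ ¬ψ, then M ⊨ ¬ρ(⌜ψ⌝). -/
import Mathlib


/- Rosser provability, falsity-to-non-provability direction:
Let T be a consistent complete theory, M ⊨ T with interpreted arithmetic, and
ρ(x) := ∃y (Prf_A(y,x) ∧ ∀z<y ¬Prf_A(z,¬x)) the Rosser provability formula from an
axiom set A axiomatizing T, with Prf_A correct on standard arguments and the standard
numerals forming an initial segment.  If ψ is a sentence with M ⊨ ¬ψ, then M ⊨ ¬ρ(⌜ψ⌝). -/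

open FirstOrder Language

namespace RosserFalse

variable {L : Language}

/-- The Rosser sentence `∃y (Prf(y,c) ∧ ∀z (z < y → ¬ Prf(z,cneg)))`. -/
noncomputable def rosser (Prf lt : L.Formula (Fin 2)) (c cneg : L.Term Empty) :
    L.Sentence :=
  ∃' (((Prf.subst ![Term.var 0, c.relabel (fun x => x.elim)]).relabel
          (fun _ => Sum.inr (0 : Fin 1)) : L.BoundedFormula Empty 1) ⊓
      ∀' ((( (lt.subst ![Term.var 1, Term.var 0]) ⟹
            ∼(Prf.subst ![Term.var 1, cneg.relabel (fun x => x.elim)])).relabel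
          (fun i => Sum.inr i) : L.BoundedFormula Empty 2)))

theorem rosser_realize (Prf lt : L.Formula (Fin 2)) (c cneg : L.Term Empty)
    (M : Type*) [L.Structure M] [Nonempty M] :
    M ⊨ rosser Prf lt c cneg ↔
      ∃ y : M, Prf.Realize ![y, c.realize (fun x => x.elim)] ∧
        ∀ z : M, lt.Realize ![z, y] → ¬ Prf.Realize ![z, cneg.realize (fun x => x.elim)] := by
  simp only [rosser, Sentence.Realize, Formula.Realize, BoundedFormula.realize_ex,
    BoundedFormula.realize_inf, BoundedFormula.realize_relabel, BoundedFormula.realize_subst,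
    BoundedFormula.realize_all, BoundedFormula.realize_imp, BoundedFormula.realize_not]
  refine exists_congr fun y => and_congr ?_ (forall_congr' fun z =>
    imp_congr ?_ (not_congr ?_)) <;>
  · refine iff_of_eq ?_
    congr 1
    · funext i
      fin_cases i <;> simp [Term.realize_relabel] <;>
        first
        | rfl
        | (congr 1; funext e; exact e.elim)
    · exact Subsingleton.elim _ _

theorem falsity_implies_rosser_unprovability
    (T : L.Theory) (hconsis : T.IsSatisfiable) (hcomp : T.IsComplete)
    (M : Type*) [L.Structure M] [Nonempty M] (hM : M ⊨ T)
    -- A axiomatizes T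
    (A : L.Theory) (hA : ∀ φ : L.Sentence, A ⊨ᵇ φ ↔ T ⊨ᵇ φ)
    -- Gödel numbering of sentences, and numerals
    (codeS : L.Sentence → ℕ) (num : ℕ → L.Term Empty)
    -- the formulas Prf_A(y,x) and y < z of the interpreted arithmetic of M
    (Prf lt : L.Formula (Fin 2))
    -- `pf n φ` : the natural number n codes a genuine first-order proof of φ from A
    (pf : ℕ → L.Sentence → Prop)
    -- the coded proof relation is sound and complete for provability from A
    (hsound : ∀ (n : ℕ) (φ : L.Sentence), pf n φ → A ⊨ᵇ φ)
    (hcompl : ∀ φ : L.Sentence, A ⊨ᵇ φ → ∃ n : ℕ, pf n φ)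
    -- Prf_A correctly represents the proof relation on standard arguments
    (hPrf : ∀ (n : ℕ) (φ : L.Sentence),
      Prf.Realize (M := M)
        ![(num n).realize (fun x => x.elim), (num (codeS φ)).realize (fun x => x.elim)]
        ↔ pf n φ)
    -- the standard numerals form an initial segment of the interpreted arithmetic of M:
    -- every nonstandard element lies strictly above every standard numeral
    (hinit : ∀ m : M, (¬ ∃ k : ℕ, m = (num k).realize (fun x => x.elim)) →
      ∀ n : ℕ, lt.Realize (M := M) ![(num n).realize (fun x => x.elim), m])
    -- ψ is a sentence false in M
    (ψ : L.Sentence) (hψ : M ⊨ ∼ψ) :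
    M ⊨ ∼(rosser Prf lt (num (codeS ψ)) (num (codeS (∼ψ)))) := by
  haveI := hM
  have hTM : ∀ φ : L.Sentence, T ⊨ᵇ φ → M ⊨ φ := fun φ h => h.realize_sentence M
  simp only [Sentence.Realize, BoundedFormula.realize_not]
  intro h
  obtain ⟨y, hy1, hy2⟩ :=
    (rosser_realize Prf lt (num (codeS ψ)) (num (codeS (∼ψ))) M).mp h
  have hTnψ : T ⊨ᵇ ∼ψ := by
    rcases hcomp.2 ψ with h' | h'
    · exact absurd (hTM ψ h') hψ
    · exact h'
  obtain ⟨π₀, hπ₀⟩ := hcompl (∼ψ) ((hA (∼ψ)).mpr hTnψ)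
  by_cases hstd : ∃ k : ℕ, y = (num k).realize (fun x => x.elim)
  · obtain ⟨k, rfl⟩ := hstd
    have : pf k ψ := (hPrf k ψ).mp hy1
    exact hψ (hTM ψ ((hA ψ).mp (hsound k ψ this)))
  · exact hy2 _ (hinit y hstd π₀) ((hPrf π₀ (∼ψ)).mpr hπ₀)

end RosserFalse
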